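/- arXiv:1909.03601 — 6 statements merged into one kernel-verified Lean document; each statement's English description precedes it below -/
import Mathlib

section
/- The bias of the WMF estimator against the ideal loss equals (1/|D|) Σ_{(u,i)} [ (c·θ_{u,i} − 1)·γ_{u,i}·δ¹_{u,i} + γ_{u,i}·(1 − θ_{u,i})·δ⁰_{u,i} ], i.e., E[L_WMF] − L_ideal equals this quantity. -/
open MeasureTheory

/-- Bias of the WMF estimator against the ideal loss. -/
theorem wmf_bias
    {Ω : Type*} [MeasurableSpace Ω] (μ : Measure Ω) [IsProbabilityMeasure μ]
    {D : Type*} [Fintype D] [Nonempty D]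
    (Y : D → Ω → ℝ) (θ γ δ1 δ0 : D → ℝ) (c : ℝ)
    (hc : 1 ≤ c)
    (hθ : ∀ d, θ d ∈ Set.Ioc (0 : ℝ) 1) (hγ : ∀ d, γ d ∈ Set.Ioc (0 : ℝ) 1)
    (hY01 : ∀ d ω, Y d ω = 0 ∨ Y d ω = 1)
    (hInt : ∀ d, Integrable (Y d) μ)
    (hmean : ∀ d, ∫ ω, Y d ω ∂μ = θ d * γ d) :
    (∫ ω, (1 / (Fintype.card D : ℝ)) *
        ∑ d, (c * Y d ω * δ1 d + (1 - Y d ω) * δ0 d) ∂μ)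
      - (1 / (Fintype.card D : ℝ)) *
          ∑ d, (γ d * δ1 d + (1 - γ d) * δ0 d)
      = (1 / (Fintype.card D : ℝ)) *
          ∑ d, ((c * θ d - 1) * γ d * δ1 d + γ d * (1 - θ d) * δ0 d) := by
  have hterm : ∀ d : D, Integrable (fun ω => c * Y d ω * δ1 d + (1 - Y d ω) * δ0 d) μ := by
    intro d
    exact ((((hInt d).const_mul c).mul_const (δ1 d)).add
      (((integrable_const (1:ℝ)).sub (hInt d)).mul_const (δ0 d)))
  have hI : ∀ d : D, ∫ ω, (c * Y d ω * δ1 d + (1 - Y d ω) * δ0 d) ∂μ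
      = c * (θ d * γ d) * δ1 d + (1 - θ d * γ d) * δ0 d := by
    intro d
    have h1 : Integrable (fun ω => c * Y d ω * δ1 d) μ :=
      ((hInt d).const_mul c).mul_const (δ1 d)
    have h2 : Integrable (fun ω => (1 - Y d ω) * δ0 d) μ :=
      ((integrable_const (1:ℝ)).sub (hInt d)).mul_const (δ0 d)
    have h3 : Integrable (fun ω => (1:ℝ) - Y d ω) μ :=
      (integrable_const (1:ℝ)).sub (hInt d)
    rw [integral_add h1 h2, integral_mul_const, integral_mul_const, integral_const_mul,
      integral_sub (integrable_const 1) (hInt d), integral_const, hmean]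
    simp
  rw [integral_const_mul, integral_finset_sum _ (fun d _ => hterm d)]
  simp only [hI]
  rw [← mul_sub, ← Finset.sum_sub_distrib]
  congr 1
  apply Finset.sum_congr rfl
  intro d _
  ring
end

section
/- The bias E[L_Expo] − L_ideal equals (1/|D|) Σ_{(u,i)} [ γ_{u,i}·(θ'_{u,i}·θ_{u,i} − 1)·δ¹_{u,i} + { θ'_{u,i} − 1 − γ_{u,i}·(θ_{u,i}·θ'_{u,i} − 1) }·δ⁰_{u,i} ]. -/
/-! Each summand of the ExpoMF loss is affine in `Y d`, so by linearity of the integral its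
expectation is obtained by substituting the mean `θ d * γ d` for `Y d`. -/

open MeasureTheory

section BinaryLoss

variable {Ω : Type*} [MeasurableSpace Ω] {μ : Measure Ω} {X : Ω → ℝ}

theorem MeasureTheory.Integrable.mul_add_one_sub_mul [IsFiniteMeasure μ] (hX : Integrable X μ)
    (b c : ℝ) :
    Integrable (fun ω => X ω * b + (1 - X ω) * c) μ := by
  refine ((hX.mul_const (b - c)).add (integrable_const c)).congr (ae_of_all μ fun ω => ?_)
  simp only [Pi.add_apply]
  ring

theorem integral_mul_add_one_sub_mul [IsProbabilityMeasure μ] (hX : Integrable X μ) (b c : ℝ) :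
    ∫ ω, (X ω * b + (1 - X ω) * c) ∂μ = (∫ ω, X ω ∂μ) * b + (1 - ∫ ω, X ω ∂μ) * c := by
  have h_affine : (fun ω => X ω * b + (1 - X ω) * c) = fun ω => X ω * (b - c) + c := by
    funext ω; ring
  rw [h_affine, integral_add (hX.mul_const _) (integrable_const c), integral_mul_const,
    integral_const, probReal_univ, one_smul]
  ring

end BinaryLoss

theorem expomf_bias_general
    {Ω : Type*} [MeasurableSpace Ω] (μ : Measure Ω) [IsProbabilityMeasure μ]
    {D : Type*} [Fintype D]
    (Y : D → Ω → ℝ) (θ θ' γ δ1 δ0 : D → ℝ)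
    (hInt : ∀ d, Integrable (Y d) μ)
    (hmean : ∀ d, ∫ ω, Y d ω ∂μ = θ d * γ d) :
    (∫ ω, (1 / (Fintype.card D : ℝ)) *
        ∑ d, θ' d * (Y d ω * δ1 d + (1 - Y d ω) * δ0 d) ∂μ)
      - (1 / (Fintype.card D : ℝ)) *
          ∑ d, (γ d * δ1 d + (1 - γ d) * δ0 d)
      = (1 / (Fintype.card D : ℝ)) *
          ∑ d, (γ d * (θ' d * θ d - 1) * δ1 d
            + (θ' d - 1 - γ d * (θ d * θ' d - 1)) * δ0 d) := by
  rw [integral_const_mul,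
    integral_finsetSum _ fun d _ => ((hInt d).mul_add_one_sub_mul _ _).const_mul (θ' d)]
  simp only [integral_const_mul, integral_mul_add_one_sub_mul (hInt _), hmean]
  rw [← mul_sub, ← Finset.sum_sub_distrib]
  congr 1
  exact Finset.sum_congr rfl fun d _ => by ring

/-- Bias of the ExpoMF weighted loss against the ideal loss. -/
theorem expomf_bias
    {Ω : Type*} [MeasurableSpace Ω] (μ : Measure Ω) [IsProbabilityMeasure μ]
    {D : Type*} [Fintype D] [Nonempty D]
    (Y : D → Ω → ℝ) (θ θ' γ δ1 δ0 : D → ℝ)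
    (hθ : ∀ d, θ d ∈ Set.Ioc (0 : ℝ) 1) (hγ : ∀ d, γ d ∈ Set.Ioc (0 : ℝ) 1)
    (hθ' : ∀ d, θ' d ∈ Set.Icc (0 : ℝ) 1)
    (hY01 : ∀ d ω, Y d ω = 0 ∨ Y d ω = 1)
    (hInt : ∀ d, Integrable (Y d) μ)
    (hmean : ∀ d, ∫ ω, Y d ω ∂μ = θ d * γ d) :
    (∫ ω, (1 / (Fintype.card D : ℝ)) *
        ∑ d, θ' d * (Y d ω * δ1 d + (1 - Y d ω) * δ0 d) ∂μ)
      - (1 / (Fintype.card D : ℝ)) *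
          ∑ d, (γ d * δ1 d + (1 - γ d) * δ0 d)
      = (1 / (Fintype.card D : ℝ)) *
          ∑ d, (γ d * (θ' d * θ d - 1) * δ1 d
            + (θ' d - 1 - γ d * (θ d * θ' d - 1)) * δ0 d) :=
  expomf_bias_general μ Y θ θ' γ δ1 δ0 hInt hmean
end

section
/- The inverse-propensity-weighted estimator L_unbiased = (1/|D|) Σ [ (Y_{u,i}/θ_{u,i})·δ¹_{u,i} + (1 − Y_{u,i}/θ_{u,i})·δ⁰_{u,i} ] is unbiased for the ideal loss: E[L_unbiased] = L_ideal. -/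
namespace MeasureTheory

variable {Ω : Type*} [MeasurableSpace Ω] {μ : Measure Ω} {Y : Ω → ℝ}

theorem Integrable.one_sub_div_const [IsFiniteMeasure μ] (hY : Integrable Y μ) (θ : ℝ) :
    Integrable (fun ω => 1 - Y ω / θ) μ :=
  (integrable_const 1).sub (hY.div_const θ)

theorem Integrable.div_mul_add_one_sub_div_mul [IsFiniteMeasure μ] (hY : Integrable Y μ)
    (θ a b : ℝ) : Integrable (fun ω => Y ω / θ * a + (1 - Y ω / θ) * b) μ :=
  ((hY.div_const θ).mul_const a).add ((hY.one_sub_div_const θ).mul_const b)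

theorem integral_div_mul_add_one_sub_div_mul [IsProbabilityMeasure μ] (hY : Integrable Y μ)
    (θ a b : ℝ) :
    ∫ ω, (Y ω / θ * a + (1 - Y ω / θ) * b) ∂μ
      = (∫ ω, Y ω ∂μ) / θ * a + (1 - (∫ ω, Y ω ∂μ) / θ) * b := by
  rw [integral_add ((hY.div_const θ).mul_const a) ((hY.one_sub_div_const θ).mul_const b),
    integral_mul_const, integral_mul_const, integral_sub (integrable_const 1) (hY.div_const θ),
    integral_div, integral_const, probReal_univ, one_smul]

end MeasureTheory

open MeasureTheory

theorem ips_unbiased_general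
    {Ω : Type*} [MeasurableSpace Ω] (μ : Measure Ω) [IsProbabilityMeasure μ]
    {D : Type*} [Fintype D]
    (Y : D → Ω → ℝ) (θ γ δ1 δ0 : D → ℝ)
    (hθ : ∀ d, θ d ∈ Set.Ioc (0 : ℝ) 1)
    (hInt : ∀ d, Integrable (Y d) μ)
    (hmean : ∀ d, ∫ ω, Y d ω ∂μ = θ d * γ d) :
    ∫ ω, (1 / (Fintype.card D : ℝ)) *
        ∑ d, ((Y d ω / θ d) * δ1 d + (1 - Y d ω / θ d) * δ0 d) ∂μ
      = (1 / (Fintype.card D : ℝ)) *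
        ∑ d, (γ d * δ1 d + (1 - γ d) * δ0 d) := by
  rw [integral_const_mul,
    integral_finsetSum _ fun d _ => (hInt d).div_mul_add_one_sub_div_mul (θ d) (δ1 d) (δ0 d)]
  congr 1
  refine Finset.sum_congr rfl fun d _ => ?_
  rw [integral_div_mul_add_one_sub_div_mul (hInt d), hmean d,
    mul_div_cancel_left₀ _ (hθ d).1.ne']

/-- The inverse-propensity-weighted estimator is unbiased for the ideal loss. -/
theorem ips_unbiased
    {Ω : Type*} [MeasurableSpace Ω] (μ : Measure Ω) [IsProbabilityMeasure μ]
    {D : Type*} [Fintype D] [Nonempty D]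
    (Y : D → Ω → ℝ) (θ γ δ1 δ0 : D → ℝ)
    (hθ : ∀ d, θ d ∈ Set.Ioc (0 : ℝ) 1) (hγ : ∀ d, γ d ∈ Set.Icc (0 : ℝ) 1)
    (hY01 : ∀ d ω, Y d ω = 0 ∨ Y d ω = 1)
    (hInt : ∀ d, Integrable (Y d) μ)
    (hmean : ∀ d, ∫ ω, Y d ω ∂μ = θ d * γ d) :
    ∫ ω, (1 / (Fintype.card D : ℝ)) *
        ∑ d, ((Y d ω / θ d) * δ1 d + (1 - Y d ω / θ d) * δ0 d) ∂μ
      = (1 / (Fintype.card D : ℝ)) *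
        ∑ d, (γ d * δ1 d + (1 - γ d) * δ0 d) :=
  ips_unbiased_general μ Y θ γ δ1 δ0 hθ hInt hmean
end

section
/- If the click variables {Y_{u,i}} are independent Bernoulli with means θ_{u,i}·γ_{u,i}, then the variance of the IPS estimator L_unbiased = (1/|D|) Σ [ (Y_{u,i}/θ_{u,i})·δ¹_{u,i} + (1 − Y_{u,i}/θ_{u,i})·δ⁰_{u,i} ] equals (1/|D|²) Σ γ_{u,i}·(1/θ_{u,i} − γ_{u,i})·(δ¹_{u,i} − δ⁰_{u,i})². -/
open MeasureTheory ProbabilityTheory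

/-! Each summand of the estimator is the affine function `δ0 + (δ1 - δ0) / θ * Y` of a Bernoulli
variable `Y` of mean `p = θ γ`, so its variance is `((δ1 - δ0) / θ) ^ 2 * p * (1 - p)`, which is
`γ (1 / θ - γ) (δ1 - δ0) ^ 2`; independence makes the variances of the summands add up. -/

section

variable {Ω : Type*} [MeasurableSpace Ω] {μ : Measure Ω}

namespace ProbabilityTheory

lemma variance_const_add_const_mul [IsProbabilityMeasure μ] {X : Ω → ℝ}
    (hX : AEStronglyMeasurable X μ) (a c : ℝ) :
    Var[fun ω ↦ a + c * X ω; μ] = c ^ 2 * Var[X; μ] := by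
  rw [variance_const_add (hX.const_mul c), variance_const_mul]

lemma memLp_of_forall_eq_zero_or_eq_one [IsFiniteMeasure μ] {X : Ω → ℝ}
    (hX : AEStronglyMeasurable X μ) (h01 : ∀ ω, X ω = 0 ∨ X ω = 1) (p : ENNReal) :
    MemLp X p μ :=
  MemLp.of_bound hX 1 <| ae_of_all _ fun ω ↦ by rcases h01 ω with h | h <;> simp [h]

lemma variance_of_forall_eq_zero_or_eq_one [IsProbabilityMeasure μ] {X : Ω → ℝ}
    (hX : AEStronglyMeasurable X μ) (h01 : ∀ ω, X ω = 0 ∨ X ω = 1) :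
    Var[X; μ] = μ[X] * (1 - μ[X]) := by
  have hsq : X ^ 2 = X := funext fun ω ↦ by rcases h01 ω with h | h <;> simp [h]
  rw [variance_eq_sub (memLp_of_forall_eq_zero_or_eq_one hX h01 2), hsq]
  ring

lemma iIndepFun.variance_fun_sum_comp {ι : Type*} [Fintype ι] {Y : ι → Ω → ℝ}
    (hY : iIndepFun Y μ) {f : ι → ℝ → ℝ} (hf : ∀ i, Measurable (f i))
    (hfY : ∀ i, MemLp (fun ω ↦ f i (Y i ω)) 2 μ) :
    Var[fun ω ↦ ∑ i, f i (Y i ω); μ] = ∑ i, Var[fun ω ↦ f i (Y i ω); μ] := by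
  rw [← Finset.sum_fn]
  refine IndepFun.variance_sum (fun i _ ↦ hfY i) fun i _ j _ hij ↦ ?_
  exact (hY.indepFun hij).comp (hf i) (hf j)

end ProbabilityTheory

lemma ips_term_eq_affine {θ : ℝ} (hθ : θ ≠ 0) (y δ1 δ0 : ℝ) :
    y / θ * δ1 + (1 - y / θ) * δ0 = δ0 + (δ1 - δ0) / θ * y := by
  field_simp
  ring

lemma memLp_ips_term [IsFiniteMeasure μ] {p : ENNReal} {Y : Ω → ℝ} (hY : MemLp Y p μ)
    {θ : ℝ} (hθ : θ ≠ 0) (δ1 δ0 : ℝ) :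
    MemLp (fun ω ↦ Y ω / θ * δ1 + (1 - Y ω / θ) * δ0) p μ := by
  simp_rw [ips_term_eq_affine hθ]
  exact (memLp_const δ0).add (hY.const_mul _)

lemma variance_ips_term [IsProbabilityMeasure μ] {Y : Ω → ℝ} (hYm : Measurable Y)
    (h01 : ∀ ω, Y ω = 0 ∨ Y ω = 1) {θ γ : ℝ} (hθ : θ ≠ 0) (hmean : μ[Y] = θ * γ)
    (δ1 δ0 : ℝ) :
    Var[fun ω ↦ Y ω / θ * δ1 + (1 - Y ω / θ) * δ0; μ] = γ * (1 / θ - γ) * (δ1 - δ0) ^ 2 := by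
  simp_rw [ips_term_eq_affine hθ]
  rw [variance_const_add_const_mul hYm.aestronglyMeasurable,
    variance_of_forall_eq_zero_or_eq_one hYm.aestronglyMeasurable h01, hmean]
  field_simp

end

theorem ips_variance_general
    {Ω : Type*} [MeasurableSpace Ω] (μ : Measure Ω) [IsProbabilityMeasure μ]
    {D : Type*} [Fintype D]
    (Y : D → Ω → ℝ) (θ γ δ1 δ0 : D → ℝ)
    (hθ : ∀ d, θ d ∈ Set.Ioc (0 : ℝ) 1)
    (hY01 : ∀ d ω, Y d ω = 0 ∨ Y d ω = 1)
    (hYm : ∀ d, Measurable (Y d))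
    (hmean : ∀ d, ∫ ω, Y d ω ∂μ = θ d * γ d)
    (hindep : iIndepFun Y μ) :
    variance (fun ω => (1 / (Fintype.card D : ℝ)) *
        ∑ d, ((Y d ω / θ d) * δ1 d + (1 - Y d ω / θ d) * δ0 d)) μ
      = (1 / (Fintype.card D : ℝ) ^ 2) *
        ∑ d, γ d * (1 / θ d - γ d) * (δ1 d - δ0 d) ^ 2 := by
  have hθ0 : ∀ d, θ d ≠ 0 := fun d ↦ (hθ d).1.ne'
  have hYLp : ∀ d, MemLp (Y d) 2 μ := fun d ↦
    memLp_of_forall_eq_zero_or_eq_one (hYm d).aestronglyMeasurable (hY01 d) 2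
  rw [variance_const_mul, one_div_pow,
    hindep.variance_fun_sum_comp (f := fun d y ↦ y / θ d * δ1 d + (1 - y / θ d) * δ0 d)
      (fun d ↦ by fun_prop) fun d ↦ memLp_ips_term (hYLp d) (hθ0 d) (δ1 d) (δ0 d)]
  simp_rw [variance_ips_term (hYm _) (hY01 _) (hθ0 _) (hmean _)]

/-- Variance of the IPS estimator under independence of the click variables. -/
theorem ips_variance
    {Ω : Type*} [MeasurableSpace Ω] (μ : Measure Ω) [IsProbabilityMeasure μ]
    {D : Type*} [Fintype D] [Nonempty D]
    (Y : D → Ω → ℝ) (θ γ δ1 δ0 : D → ℝ)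
    (hθ : ∀ d, θ d ∈ Set.Ioc (0 : ℝ) 1) (hγ : ∀ d, γ d ∈ Set.Icc (0 : ℝ) 1)
    (hY01 : ∀ d ω, Y d ω = 0 ∨ Y d ω = 1)
    (hYm : ∀ d, Measurable (Y d))
    (hmean : ∀ d, ∫ ω, Y d ω ∂μ = θ d * γ d)
    (hindep : iIndepFun Y μ) :
    variance (fun ω => (1 / (Fintype.card D : ℝ)) *
        ∑ d, ((Y d ω / θ d) * δ1 d + (1 - Y d ω / θ d) * δ0 d)) μ
      = (1 / (Fintype.card D : ℝ) ^ 2) *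
        ∑ d, γ d * (1 / θ d - γ d) * (δ1 d - δ0 d) ^ 2 :=
  ips_variance_general μ Y θ γ δ1 δ0 hθ hY01 hYm hmean hindep
end

section
/- The bias of the clipped estimator satisfies E[L_clipped] − L_ideal = (1/|D|) Σ_{(u,i): θ_{u,i} ≤ M} γ_{u,i}·(θ_{u,i}/M − 1)·(δ¹_{u,i} − δ⁰_{u,i}). -/
open MeasureTheory

/-- Bias of the clipped estimator. -/
theorem clipped_bias
    {Ω : Type*} [MeasurableSpace Ω] (μ : Measure Ω) [IsProbabilityMeasure μ]
    {D : Type*} [Fintype D] [Nonempty D]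
    (Y : D → Ω → ℝ) (θ γ δ1 δ0 : D → ℝ) (M : ℝ)
    (hM : M ∈ Set.Ioc (0 : ℝ) 1)
    (hθ : ∀ d, θ d ∈ Set.Ioc (0 : ℝ) 1) (hγ : ∀ d, γ d ∈ Set.Icc (0 : ℝ) 1)
    (hY01 : ∀ d ω, Y d ω = 0 ∨ Y d ω = 1)
    (hInt : ∀ d, Integrable (Y d) μ)
    (hmean : ∀ d, ∫ ω, Y d ω ∂μ = θ d * γ d) :
    (∫ ω, (1 / (Fintype.card D : ℝ)) *
        ∑ d, ((Y d ω / max (θ d) M) * δ1 d + (1 - Y d ω / max (θ d) M) * δ0 d) ∂μ)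
      - (1 / (Fintype.card D : ℝ)) *
          ∑ d, (γ d * δ1 d + (1 - γ d) * δ0 d)
      = (1 / (Fintype.card D : ℝ)) *
          ∑ d ∈ Finset.univ.filter (fun d => θ d ≤ M),
            γ d * (θ d / M - 1) * (δ1 d - δ0 d) := by
  have hθM : ∀ d, max (θ d) M ≠ 0 := fun d =>
    ne_of_gt (lt_max_of_lt_right hM.1)
  -- rewrite integrand as affine function in Y
  have hfun : ∀ d ω,
      (Y d ω / max (θ d) M) * δ1 d + (1 - Y d ω / max (θ d) M) * δ0 d
        = ((δ1 d - δ0 d) / max (θ d) M) * Y d ω + δ0 d := by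
    intro d ω; ring
  have hint : ∀ d, Integrable
      (fun ω => (Y d ω / max (θ d) M) * δ1 d + (1 - Y d ω / max (θ d) M) * δ0 d) μ := by
    intro d
    simp only [hfun]
    exact ((hInt d).const_mul _).add (integrable_const _)
  have hI : (∫ ω, (1 / (Fintype.card D : ℝ)) *
        ∑ d, ((Y d ω / max (θ d) M) * δ1 d + (1 - Y d ω / max (θ d) M) * δ0 d) ∂μ)
      = (1 / (Fintype.card D : ℝ)) *
        ∑ d, (((δ1 d - δ0 d) / max (θ d) M) * (θ d * γ d) + δ0 d) := by
    rw [integral_const_mul, integral_finset_sum _ (fun d _ => hint d)]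
    congr 1
    refine Finset.sum_congr rfl fun d _ => ?_
    simp only [hfun]
    rw [integral_add ((hInt d).const_mul _) (integrable_const _),
      integral_const_mul, hmean d, integral_const]
    simp
  rw [hI, ← mul_sub, ← Finset.sum_sub_distrib]
  congr 1
  rw [Finset.sum_filter]
  refine Finset.sum_congr rfl fun d _ => ?_
  by_cases h : θ d ≤ M
  · simp only [h, if_true]
    rw [max_eq_right h]
    field_simp
    ring
  · simp only [h, if_false]
    rw [max_eq_left (le_of_not_ge h)]
    have : θ d ≠ 0 := ne_of_gt (hθ d).1
    field_simp
    ring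
end

section
/- The absolute bias of the clipped estimator is bounded by (1/|D|) Σ_{(u,i): θ_{u,i} ≤ M} γ_{u,i}·(1 − θ_{u,i}/M)·|δ¹_{u,i} − δ⁰_{u,i}|, and in particular the clipped estimator's bias tends to 0 as M → 0 (is zero once M < min θ_{u,i}). -/
open MeasureTheory

/-- The absolute bias of the clipped estimator is bounded, and vanishes once
M is below every propensity score. -/
theorem clipped_bias_bound
    {Ω : Type*} [MeasurableSpace Ω] (μ : Measure Ω) [IsProbabilityMeasure μ]
    {D : Type*} [Fintype D] [Nonempty D]
    (Y : D → Ω → ℝ) (θ γ δ1 δ0 : D → ℝ) (M : ℝ)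
    (hM : M ∈ Set.Ioc (0 : ℝ) 1)
    (hθ : ∀ d, θ d ∈ Set.Ioc (0 : ℝ) 1) (hγ : ∀ d, γ d ∈ Set.Icc (0 : ℝ) 1)
    (hY01 : ∀ d ω, Y d ω = 0 ∨ Y d ω = 1)
    (hInt : ∀ d, Integrable (Y d) μ)
    (hmean : ∀ d, ∫ ω, Y d ω ∂μ = θ d * γ d) :
    |(∫ ω, (1 / (Fintype.card D : ℝ)) *
        ∑ d, ((Y d ω / max (θ d) M) * δ1 d + (1 - Y d ω / max (θ d) M) * δ0 d) ∂μ)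
      - (1 / (Fintype.card D : ℝ)) *
          ∑ d, (γ d * δ1 d + (1 - γ d) * δ0 d)|
      ≤ (1 / (Fintype.card D : ℝ)) *
          ∑ d ∈ Finset.univ.filter (fun d => θ d ≤ M),
            γ d * (1 - θ d / M) * |δ1 d - δ0 d| ∧
    ((∀ d, M < θ d) →
      (∫ ω, (1 / (Fintype.card D : ℝ)) *
        ∑ d, ((Y d ω / max (θ d) M) * δ1 d + (1 - Y d ω / max (θ d) M) * δ0 d) ∂μ)
      - (1 / (Fintype.card D : ℝ)) *
          ∑ d, (γ d * δ1 d + (1 - γ d) * δ0 d) = 0) := by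
  obtain ⟨hM0, hM1⟩ := hM
  have hn0 : (0:ℝ) < (Fintype.card D : ℝ) := by
    exact_mod_cast Fintype.card_pos
  set t : D → ℝ := fun d => max (θ d) M with ht
  have ht0 : ∀ d, 0 < t d := fun d => lt_max_of_lt_right hM0
  have heq : ∀ d, (fun ω => (Y d ω / t d) * δ1 d + (1 - Y d ω / t d) * δ0 d)
      = fun ω => δ0 d + Y d ω * ((δ1 d - δ0 d) / t d) := by
    intro d; funext ω
    have := (ht0 d).ne'
    field_simp; ring
  have hint : ∀ d, Integrable
      (fun ω => (Y d ω / t d) * δ1 d + (1 - Y d ω / t d) * δ0 d) μ := by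
    intro d; rw [heq d]
    exact (integrable_const _).add ((hInt d).mul_const _)
  have hI : ∀ d, ∫ ω, ((Y d ω / t d) * δ1 d + (1 - Y d ω / t d) * δ0 d) ∂μ
      = δ0 d + θ d * γ d * ((δ1 d - δ0 d) / t d) := by
    intro d
    rw [heq d, integral_add (integrable_const _) ((hInt d).mul_const _),
      integral_const, integral_mul_const, hmean d]
    simp
  have hmain : (∫ ω, (1 / (Fintype.card D : ℝ)) *
        ∑ d, ((Y d ω / t d) * δ1 d + (1 - Y d ω / t d) * δ0 d) ∂μ)
      = (1 / (Fintype.card D : ℝ)) *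
        ∑ d, (δ0 d + θ d * γ d * ((δ1 d - δ0 d) / t d)) := by
    rw [integral_const_mul, integral_finset_sum _ (fun d _ => hint d)]
    exact congrArg _ (Finset.sum_congr rfl fun d _ => hI d)
  have hdiff : (∫ ω, (1 / (Fintype.card D : ℝ)) *
        ∑ d, ((Y d ω / t d) * δ1 d + (1 - Y d ω / t d) * δ0 d) ∂μ)
      - (1 / (Fintype.card D : ℝ)) * ∑ d, (γ d * δ1 d + (1 - γ d) * δ0 d)
      = (1 / (Fintype.card D : ℝ)) *
        ∑ d, (θ d * γ d / t d - γ d) * (δ1 d - δ0 d) := by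
    rw [hmain, ← mul_sub, ← Finset.sum_sub_distrib]
    congr 1
    refine Finset.sum_congr rfl fun d _ => ?_
    have := (ht0 d).ne'
    field_simp; ring
  -- terms vanish when M < θ d
  have hzero : ∀ d, M < θ d → (θ d * γ d / t d - γ d) * (δ1 d - δ0 d) = 0 := by
    intro d hd
    have htd : t d = θ d := max_eq_left hd.le
    rw [htd, mul_comm (θ d), mul_div_assoc, div_self (hθ d).1.ne']
    ring
  constructor
  · rw [hdiff]
    have hsum : ∑ d, (θ d * γ d / t d - γ d) * (δ1 d - δ0 d)
        = ∑ d ∈ Finset.univ.filter (fun d => θ d ≤ M),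
            (θ d * γ d / t d - γ d) * (δ1 d - δ0 d) := by
      symm
      refine Finset.sum_filter_of_ne fun d _ hne => ?_
      by_contra h
      exact hne (hzero d (lt_of_not_ge h))
    rw [hsum, abs_mul, abs_of_pos (by positivity : (0:ℝ) < 1 / (Fintype.card D : ℝ))]
    refine mul_le_mul_of_nonneg_left ?_ (by positivity)
    refine le_trans (Finset.abs_sum_le_sum_abs _ _) ?_
    refine Finset.sum_le_sum fun d hd => ?_
    rw [Finset.mem_filter] at hd
    have hdM : θ d ≤ M := hd.2
    have htd : t d = M := max_eq_right hdM
    rw [abs_mul, htd]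
    have h1 : |θ d * γ d / M - γ d| = γ d * (1 - θ d / M) := by
      rw [mul_comm (θ d), mul_div_assoc, abs_of_nonpos]
      · field_simp; ring
      · have h2 : θ d / M ≤ 1 := (div_le_one hM0).mpr hdM
        have hγ0 := (hγ d).1
        have := mul_le_of_le_one_right hγ0 h2
        linarith
    rw [h1]
  · intro hall
    rw [hdiff]
    have : ∑ d, (θ d * γ d / t d - γ d) * (δ1 d - δ0 d) = 0 :=
      Finset.sum_eq_zero fun d _ => hzero d (hall d)
    rw [this, mul_zero]
end
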